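/- Let s and t be processes of a probabilistic transition system over a finite action set 𝒜 such that P_s^1(M₀) ≠ P_t^1(M₀) for some menu M₀ ⊆ 𝒜, and let M be a menu with a minimal number of actions among those menus M' with P_s^1(M') ≠ P_t^1(M'). Then the deterministic depth-one test T = Σ_{a ∉ M} a.ω (whose root offers exactly the actions in 𝒜 \ M, each followed by a success state) distinguishes s and t: R(s,T) ≠ R(t,T). -/

import Mathlib

/-! # Reactive probabilistic processes and testing (preamble)

Finite process graphs of a probabilistic transition system (PTS) over a finite
action set `A` are modelled by the inductive type `Proc A`: a process is either
an *action state* (a list of action-labelled successors) or a *probabilistic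
state* (a list of probability-weighted successors).  Well-formedness (`WF`)
requires action transitions to be deterministic per action and, at
probabilistic states, the weights to lie in `(0,1]`, sum to `1`, and lead to
action states.  Tests are processes over `Option A`, where the label `none`
plays the role of the success action `ω`.  The result `Res s T` of testing is a
rational function, an element of the field `RF A` of rational functions in
variables `A` over `ℝ`. -/

/-- Rational functions with variables in `A` over `ℝ` (the set `𝓡`). -/
abbrev RF (A : Type) := FractionRing (MvPolynomial A ℝ)

/-- The scalar `r` as a rational function. -/
noncomputable def Cr {A : Type} (r : ℝ) : RF A :=
  algebraMap (MvPolynomial A ℝ) (RF A) (MvPolynomial.C r)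

/-- The variable `a` as a rational function. -/
noncomputable def Xv {A : Type} (a : A) : RF A :=
  algebraMap (MvPolynomial A ℝ) (RF A) (MvPolynomial.X a)

/-- Process graphs over the action set `A`. -/
inductive Proc (A : Type) : Type
  | act  : List (A × Proc A) → Proc A
  | prob : List (ℝ × Proc A) → Proc A

namespace Proc

variable {A : Type}

/-- The menu `I(s)`: the set of actions enabled at an action state. -/
def menu [DecidableEq A] : Proc A → Finset A
  | act l => (l.map Prod.fst).toFinset
  | prob _ => ∅

/-- Well-formedness of a process graph of a PTS. -/
inductive WF : Proc A → Prop
  | act {l : List (A × Proc A)} :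
      (∀ p ∈ l, ∀ q ∈ l, p.1 = q.1 → p.2 = q.2) →
      (∀ p ∈ l, WF p.2) →
      WF (Proc.act l)
  | prob {l : List (ℝ × Proc A)} :
      (l.map Prod.fst).sum = 1 →
      (∀ p ∈ l, 0 < p.1) →
      (∀ p ∈ l, p.1 ≤ 1) →
      (∀ p ∈ l, ∃ l', p.2 = Proc.act l') →
      (∀ p ∈ l, WF p.2) →
      WF (Proc.prob l)

/-- A process with no probabilistic states (a deterministic process). -/
inductive NoProb : Proc A → Prop
  | act {l : List (A × Proc A)} :
      (∀ p ∈ l, NoProb p.2) → NoProb (Proc.act l)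

/-- First-level menu probability `P_s^1(M)`. -/
def P1 [DecidableEq A] (M : Finset A) : Proc A → ℝ
  | act l => if (l.map Prod.fst).toFinset = M then 1 else 0
  | prob l => (l.attach.map fun x => x.1.1 * P1 M x.1.2).sum
decreasing_by
  rcases x with ⟨⟨r, s⟩, hx⟩
  have h := List.sizeOf_lt_of_mem hx
  simp only [Prod.mk.sizeOf_spec, Proc.prob.sizeOf_spec] at h ⊢
  omega

/-- The `a`-successor of a state, if any. -/
def getSucc [DecidableEq A] (a : A) : Proc A → Option (Proc A)
  | act l => (l.find? fun p => decide (p.1 = a)).map Prod.snd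
  | prob _ => none

/-- The `a`-successor of a state, defaulting to the deadlocked state. -/
def succD [DecidableEq A] (a : A) (s : Proc A) : Proc A :=
  (getSucc a s).getD (Proc.act [])

lemma sizeOf_succD_lt {B : Type} [SizeOf B] [DecidableEq B] {a : B} {l : List (B × Proc B)}
    (h : a ∈ menu (Proc.act l)) :
    sizeOf (succD a (Proc.act l)) < sizeOf (Proc.act l) := by
  rw [menu, List.mem_toFinset, List.mem_map] at h
  obtain ⟨p, hp, rfl⟩ := h
  have hsome : (l.find? fun q => decide (q.1 = p.1)).isSome := by
    rw [List.find?_isSome]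
    exact ⟨p, hp, by simp⟩
  obtain ⟨q, hq⟩ := Option.isSome_iff_exists.mp hsome
  have hmem := List.mem_of_find?_eq_some hq
  have h1 := List.sizeOf_lt_of_mem hmem
  simp only [succD, getSucc, hq, Option.map_some, Option.getD_some]
  rcases q with ⟨b, t⟩
  simp only [Prod.mk.sizeOf_spec, Proc.act.sizeOf_spec] at h1 ⊢
  omega

/-- The process `s_{(M,a)}` obtained from `s` given that the menu `M` was
offered and the action `a ∈ M` was performed (Definition 3 of the paper). -/
noncomputable def pafter [DecidableEq A] (M : Finset A) (a : A) : Proc A → Proc A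
  | act l => succD a (act l)
  | prob l =>
      let l₁ := l.filter fun x => decide (menu x.2 = M)
      let π : ℝ := (l₁.map Prod.fst).sum
      prob (l₁.flatMap fun x =>
        match getSucc a x.2 with
        | none => []
        | some (Proc.prob l'') => l''.map fun y => (x.1 * y.1 / π, y.2)
        | some s' => [(x.1 / π, s')])

/-- The conditional ready-trace probability
`P_s^{n+1}(M | M₁,a₁,…,Mₙ,aₙ)`, as a partial (option-valued) function;
`none` means "undefined". -/
noncomputable def Pcond [DecidableEq A] : Proc A → List (Finset A × A) → Finset A → Option ℝ
  | s, [], M => some (P1 M s)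
  | s, (M₁, a₁) :: rest, M =>
      if 0 < P1 M₁ s then Pcond (pafter M₁ a₁ s) rest M else none

/-- Probabilistic ready-trace equivalence `≈_O`: all conditional ready-trace
probabilities are defined at the same time and agree whenever defined. -/
def RTEquiv [DecidableEq A] (s t : Proc A) : Prop :=
  ∀ (tr : List (Finset A × A)) (M : Finset A), Pcond s tr M = Pcond t tr M

/-- Does the test enable the success action `ω` (encoded by `none`)? -/
def enablesOmega : Proc (Option A) → Bool
  | Proc.act l => l.any fun p => p.1.isNone
  | Proc.prob _ => false

/-- The set `K = I(s) ∩ I(T)` of actions on which process and test can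
synchronize. -/
def sync [DecidableEq A] (s : Proc A) (T : Proc (Option A)) : Finset A :=
  (menu s).filter fun a => some a ∈ menu T

/-- The result `R(s,T) ∈ 𝓡` of testing process `s` with test `T`
(Definition 6 of the paper). -/
noncomputable def Res [DecidableEq A] : Proc A → Proc (Option A) → RF A
  | Proc.prob ls, T =>
      if enablesOmega T then 1
      else (ls.attach.map fun x => Cr x.1.1 * Res x.1.2 T).sum
  | Proc.act ls, Proc.prob lt =>
      (lt.attach.map fun x => Cr x.1.1 * Res (Proc.act ls) x.1.2).sum
  | Proc.act ls, Proc.act lt =>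
      if enablesOmega (Proc.act lt) then 1
      else
        ∑ a ∈ (sync (Proc.act ls) (Proc.act lt)).attach,
          (Xv a.1 / ∑ b ∈ sync (Proc.act ls) (Proc.act lt), Xv b) *
            Res (succD a.1 (Proc.act ls)) (succD (some a.1) (Proc.act lt))
termination_by s T => sizeOf s + sizeOf T
decreasing_by
  · rcases x with ⟨⟨r, s⟩, hx⟩
    have h := List.sizeOf_lt_of_mem hx
    simp only [Prod.mk.sizeOf_spec, Proc.prob.sizeOf_spec] at h ⊢
    omega
  · rcases x with ⟨⟨r, s⟩, hx⟩
    have h := List.sizeOf_lt_of_mem hx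
    simp only [Prod.mk.sizeOf_spec, Proc.prob.sizeOf_spec] at h ⊢
    omega
  · have h1 : a.1 ∈ menu (Proc.act ls) := (Finset.mem_filter.mp a.2).1
    have h2 : (some a.1 : Option A) ∈ menu (Proc.act lt) :=
      (Finset.mem_filter.mp a.2).2
    exact Nat.add_lt_add (sizeOf_succD_lt h1) (sizeOf_succD_lt h2)

/-- Testing equivalence `≈_T`: same testing result for every test. -/
def TestEquiv [DecidableEq A] (s t : Proc A) : Prop :=
  ∀ T : Proc (Option A), WF T → Res s T = Res t T

end Proc

namespace Proc

/-- A state that immediately reports success (`ω`, encoded by `none`). -/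
def omegaState (A : Type) : Proc (Option A) :=
  Proc.act [(none, Proc.act ([] : List (Option A × Proc (Option A))))]

/-- The deterministic depth-one test `Σ_{a ∉ M} a.ω`: its root offers exactly
the actions in `𝒜 \\ M`, each followed by a success state. -/
noncomputable def menuTest (A : Type) [Fintype A] [DecidableEq A] (M : Finset A) : Proc (Option A) :=
  Proc.act ((Finset.univ \ M).toList.map fun a => ((some a : Option A), omegaState A))

end Proc

namespace Proc

variable {A : Type} [DecidableEq A]

set_option linter.unusedSectionVars false

/-- `Cr` as a ring homomorphism. -/
noncomputable def CrHom (A : Type) : ℝ →+* RF A :=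
  (algebraMap (MvPolynomial A ℝ) (RF A)).comp (MvPolynomial.C)

lemma Cr_eq_CrHom (r : ℝ) : (Cr r : RF A) = CrHom A r := rfl

lemma Cr_injective : Function.Injective (Cr (A := A)) := by
  intro x y h
  exact MvPolynomial.C_injective A ℝ
    (IsFractionRing.injective (MvPolynomial A ℝ) (RF A) h)

lemma res_omega (u : Proc A) : Res u (omegaState A) = 1 := by
  cases u with
  | act l =>
      rw [show omegaState A = Proc.act [(none, Proc.act [])] from rfl, Res.eq_3]
      simp [enablesOmega]
  | prob l => rw [Res.eq_1]; simp [enablesOmega, omegaState]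

variable [Fintype A]

lemma enablesOmega_menuTest (M : Finset A) : enablesOmega (menuTest A M) = false := by
  simp [enablesOmega, menuTest]

lemma sync_menuTest (s : Proc A) (M : Finset A) :
    sync s (menuTest A M) = menu s \ M := by
  ext a
  simp [sync, menuTest, menu, Finset.mem_sdiff]

lemma succD_menuTest {M : Finset A} {a : A} (ha : a ∉ M) :
    succD (some a) (menuTest A M) = omegaState A := by
  simp only [succD, menuTest, getSucc, List.find?_map, Option.map_map]
  have hpred : ((fun p : Option A × Proc (Option A) => decide (p.1 = some a)) ∘
      fun b : A => ((some b : Option A), omegaState A)) = fun b => decide (b = a) := by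
    funext b; simp
  rw [hpred]
  rcases h : List.find? (fun b => decide (b = a)) (Finset.univ \ M).toList with _ | q
  · exfalso
    have hex : ∃ b ∈ (Finset.univ \ M).toList, (fun b => decide (b = a)) b = true :=
      ⟨a, by simp [ha], by simp⟩
    rw [← List.find?_isSome, h] at hex
    simp at hex
  · have hq : q = a := by simpa using List.find?_some h
    subst hq
    simp

lemma list_sum_swap {beta iota : Type} (l : List beta) (P : Finset iota) (f : beta → iota → ℝ) :
    (l.map fun x => ∑ i ∈ P, f x i).sum = ∑ i ∈ P, (l.map fun x => f x i).sum := by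
  induction l with
  | nil => simp
  | cons a l ih => simp [ih, Finset.sum_add_distrib]

lemma list_sum_sub {beta : Type} (l : List beta) (f g : beta → ℝ) :
    (l.map fun x => f x - g x).sum = (l.map f).sum - (l.map g).sum := by
  induction l with
  | nil => simp
  | cons a l ih => simp [ih]; ring

lemma P1_act (N : Finset A) (l : List (A × Proc A)) :
    P1 N (Proc.act l) = if menu (Proc.act l) = N then 1 else 0 := by
  rw [P1, menu]

lemma sum_powerset_P1_act (M : Finset A) (l : List (A × Proc A)) :
    (∑ N ∈ M.powerset, P1 N (Proc.act l))
      = if menu (Proc.act l) ⊆ M then 1 else 0 := by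
  simp only [P1_act]
  rw [Finset.sum_ite_eq]
  simp [Finset.mem_powerset]

lemma sum_X_ne_zero {K : Finset A} (hK : K.Nonempty) :
    (∑ b ∈ K, Xv b : RF A) ≠ 0 := by
  have : (∑ b ∈ K, Xv b : RF A)
      = algebraMap (MvPolynomial A ℝ) (RF A) (∑ b ∈ K, MvPolynomial.X b) := by
    rw [map_sum]; rfl
  rw [this]
  intro h0
  have hpoly : (∑ b ∈ K, MvPolynomial.X b : MvPolynomial A ℝ) = 0 := by
    apply IsFractionRing.injective (MvPolynomial A ℝ) (RF A)
    rw [h0, map_zero]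
  obtain ⟨b, hb⟩ := hK
  have hc := congrArg (MvPolynomial.coeff (Finsupp.single b 1)) hpoly
  rw [MvPolynomial.coeff_sum] at hc
  simp only [MvPolynomial.coeff_X', MvPolynomial.coeff_zero] at hc
  have hrw : (∑ c ∈ K, if (fun₀ | c => 1) = (fun₀ | b => 1 : A →₀ ℕ) then (1:ℝ) else 0)
      = ∑ c ∈ K, if c = b then (1:ℝ) else 0 :=
    Finset.sum_congr rfl fun c _ => if_congr (Finsupp.single_left_inj one_ne_zero) rfl rfl
  rw [hrw, Finset.sum_ite_eq' K b (fun _ => (1:ℝ)), if_pos hb] at hc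
  exact one_ne_zero hc

lemma res_menuTest (M : Finset A) :
    ∀ s : Proc A, WF s →
      Res s (menuTest A M) = Cr (1 - ∑ N ∈ M.powerset, P1 N s) := by
  intro s hs
  induction hs with
  | @act l hdet hwf ih =>
    have hT : menuTest A M
        = Proc.act (((Finset.univ \ M).toList).map
            fun a => ((some a : Option A), omegaState A)) := rfl
    have hK : sync (Proc.act l) (menuTest A M) = menu (Proc.act l) \ M :=
      sync_menuTest _ _
    rw [hT, Res.eq_3, if_neg (by rw [← hT, enablesOmega_menuTest]; simp)]
    rw [← hT, hK]
    have hsucc : ∀ a ∈ (menu (Proc.act l) \ M).attach,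
        (Xv a.1 / ∑ b ∈ menu (Proc.act l) \ M, Xv b) *
          Res (succD a.1 (Proc.act l)) (succD (some a.1) (menuTest A M))
        = Xv a.1 / ∑ b ∈ menu (Proc.act l) \ M, Xv b := by
      intro a _
      have haM : a.1 ∉ M := (Finset.mem_sdiff.mp a.2).2
      rw [succD_menuTest haM, res_omega, mul_one]
    rw [Finset.sum_congr rfl hsucc]
    by_cases hsub : menu (Proc.act l) ⊆ M
    · have : menu (Proc.act l) \ M = ∅ := Finset.sdiff_eq_empty_iff_subset.mpr hsub
      rw [this]
      rw [sum_powerset_P1_act, if_pos hsub]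
      simp [Cr]
    · have hne : (menu (Proc.act l) \ M).Nonempty := by
        rw [Finset.sdiff_nonempty]; exact hsub
      rw [sum_powerset_P1_act, if_neg hsub]
      have hS := sum_X_ne_zero (A := A) hne
      rw [Finset.sum_attach (menu (Proc.act l) \ M)
        (fun a => Xv a / ∑ b ∈ menu (Proc.act l) \ M, Xv b)]
      rw [← Finset.sum_div, div_self hS]
      simp [Cr]
  | @prob l hsum hpos hle hact hwf ih =>
    rw [Res.eq_1, if_neg (by rw [enablesOmega_menuTest]; simp)]
    have hstep : ∀ x ∈ l.attach,
        Cr x.1.1 * Res x.1.2 (menuTest A M)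
          = CrHom A (x.1.1 * (1 - ∑ N ∈ M.powerset, P1 N x.1.2)) := by
      intro x _
      rw [ih x.1 x.2, Cr_eq_CrHom, Cr_eq_CrHom, ← map_mul]
    rw [List.map_congr_left hstep]
    rw [show (fun x : {p // p ∈ l} =>
        CrHom A (x.1.1 * (1 - ∑ N ∈ M.powerset, P1 N x.1.2)))
      = (CrHom A) ∘ (fun x : {p // p ∈ l} =>
          x.1.1 * (1 - ∑ N ∈ M.powerset, P1 N x.1.2)) from rfl]
    rw [← List.map_map, ← map_list_sum, Cr_eq_CrHom]
    congr 1
    have h1 : (l.attach.map fun x => x.1.1).sum = 1 := by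
      rw [List.attach_map_val (l := l) (f := fun p => p.1)]; exact hsum
    have hP : (∑ N ∈ M.powerset, P1 N (Proc.prob l))
        = (l.attach.map fun x =>
            x.1.1 * ∑ N ∈ M.powerset, P1 N x.1.2).sum := by
      have : ∀ N, P1 N (Proc.prob l)
          = (l.attach.map fun x => x.1.1 * P1 N x.1.2).sum := fun N => by rw [P1]
      rw [Finset.sum_congr rfl fun N _ => this N]
      rw [← list_sum_swap l.attach M.powerset (fun x N => x.1.1 * P1 N x.1.2)]
      congr 1
      exact List.map_congr_left fun x _ => (Finset.mul_sum _ _ _).symm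
    rw [hP]
    have : (l.attach.map fun x : {p // p ∈ l} =>
        x.1.1 * (1 - ∑ N ∈ M.powerset, P1 N x.1.2)).sum
      = (l.attach.map fun x : {p // p ∈ l} => x.1.1).sum
        - (l.attach.map fun x : {p // p ∈ l} =>
            x.1.1 * ∑ N ∈ M.powerset, P1 N x.1.2).sum := by
      rw [← list_sum_sub]
      exact congrArg List.sum (List.map_congr_left fun x _ => by ring)
    rw [this, h1]

end Proc

open Proc in
/-- Case 1 of the proof of Theorem 2: if `M` is a menu of
minimal cardinality among the menus on which the first-level menu
probabilities of `s` and `t` differ, then the test `T_M = Σ_{a ∉ M} a.ω`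
distinguishes `s` and `t`. -/
theorem stmt10 {A : Type} [Fintype A] [DecidableEq A] (s t : Proc A)
    (hs : WF s) (ht : WF t) (M : Finset A)
    (hdiff : P1 M s ≠ P1 M t)
    (hmin : ∀ M' : Finset A, P1 M' s ≠ P1 M' t → M.card ≤ M'.card) :
    Res s (menuTest A M) ≠ Res t (menuTest A M) := by
  rw [res_menuTest M s hs, res_menuTest M t ht]
  intro h
  have hft := Cr_injective h
  have hsum : ∑ N ∈ M.powerset, P1 N s = ∑ N ∈ M.powerset, P1 N t := by linarith
  have hzero : ∑ N ∈ M.powerset, (P1 N s - P1 N t) = 0 := by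
    rw [Finset.sum_sub_distrib, hsum, sub_self]
  have hsingle : ∑ N ∈ M.powerset, (P1 N s - P1 N t) = P1 M s - P1 M t := by
    apply Finset.sum_eq_single M
    · intro N hN hNe
      by_contra hne
      have hd : P1 N s ≠ P1 N t := fun he => hne (by rw [he, sub_self])
      have := hmin N hd
      have hlt : N.card < M.card :=
        Finset.card_lt_card (Finset.ssubset_iff_subset_ne.mpr
          ⟨Finset.mem_powerset.mp hN, hNe⟩)
      omega
    · intro hM
      exact absurd (Finset.mem_powerset.mpr (subset_refl M)) hM
  rw [hzero] at hsingle
  exact hdiff (by linarith)
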